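/- Define Λ : [−1,1] → X by Λ(t) = L(2t+1) for t ∈ [−1,0] and Λ(t) = swap(L(2t−1)) for t ∈ [0,1], where swap interchanges the rectangles C₁ and C₂. Then Λ is well defined and continuous (the two formulas agree at t = 0, since L(1) = swap(L(−1))), Λ(−1) = Λ(1), and the loop Λ is not null-homotopic in X. (This witnesses that the homology class of α₁(ℓ₁,μ₁) in the arity (2,2) component of the Swiss-Cheese operad is nonzero, which is needed in the non-formality argument.) -/

import Mathlib

/-- A 4-tuple of rectangles `(C₁, C₂, O₋, O₊)` in `ℝ²`, each recorded by the endpoints of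
its two defining intervals: index `0` is `C₁`, `1` is `C₂`, `2` is `O₋`, `3` is `O₊`; the
entry at each index is `((a₀, b₀), (a₁, b₁))`, standing for `[a₀,b₀] × [a₁,b₁]`. -/
abbrev Cfg : Type := Fin 4 → (ℝ × ℝ) × (ℝ × ℝ)

/-- The rectangle `[a₀,b₀] × [a₁,b₁]` determined by the endpoint data `r = ((a₀,b₀),(a₁,b₁))`. -/
def rect (r : (ℝ × ℝ) × (ℝ × ℝ)) : Set (ℝ × ℝ) :=
  Set.Icc r.1.1 r.1.2 ×ˢ Set.Icc r.2.1 r.2.2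

/-- The space `X` of 4-tuples `(C₁, C₂, O₋, O₊)` of rectangles (products of two nondegenerate
closed intervals) contained in `[-1,1]²`, with pairwise disjoint interiors, such that the
first intervals of `C₁` and `C₂` are contained in `[0,1]` and the first intervals of `O₋`
and `O₊` have left endpoint `0`.  It is topologized as a subspace of `ℝ^16` via the interval
endpoints. -/
def Xcfg : Set Cfg :=
  {x | (∀ k, (x k).1.1 < (x k).1.2 ∧ (x k).2.1 < (x k).2.2) ∧
       (∀ k, -1 ≤ (x k).1.1 ∧ (x k).1.2 ≤ 1 ∧ -1 ≤ (x k).2.1 ∧ (x k).2.2 ≤ 1) ∧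
       (∀ k l, k ≠ l → Disjoint (interior (rect (x k))) (interior (rect (x l)))) ∧
       (0 ≤ (x 0).1.1 ∧ (x 0).1.2 ≤ 1) ∧ (0 ≤ (x 1).1.1 ∧ (x 1).1.2 ≤ 1) ∧
       (x 2).1.1 = 0 ∧ (x 3).1.1 = 0}

/-- Interchanging the two closed rectangles `C₁` and `C₂` of a configuration. -/
def swapC (x : Cfg) : Cfg := fun k => x (Equiv.swap (0 : Fin 4) 1 k)

/-- `J(+) = [0,1]` and `J(-) = [-1,0]` (`true` is `+`, `false` is `-`). -/
def Jb (b : Bool) : ℝ × ℝ := if b then (0, 1) else (-1, 0)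

/-- `T(u) = max(1/2, (1+u)/2)`. -/
noncomputable def Tf (u : ℝ) : ℝ := max (1/2) ((1 + u) / 2)

/-- `I₊(u) = [min(0,u), 1]` and `I₋(u) = [-1, -min(0,u)]`. -/
noncomputable def Ib (b : Bool) (u : ℝ) : ℝ × ℝ :=
  if b then (min 0 u, 1) else (-1, -min 0 u)

/-- The regime `|t| ≤ 1/3` of `η⁺₁`, with sign `b` and parameter `u = 6|t| - 1`:
`C₁ = [1/2,1] × [-1,1]`, `C₂ = [1/4,1/2] × I_b(u)`, `O_b = [0,1/4] × J(b)`,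
`O_{-b} = [0, T(u)/2] × J(-b)`. -/
noncomputable def etaIn (b : Bool) (u : ℝ) : Cfg := fun k =>
  if k = 0 then ((1/2, 1), (-1, 1))
  else if k = 1 then ((1/4, 1/2), Ib b u)
  else if k = 2 then ((0, if b then Tf u / 2 else 1/4), Jb false)
  else ((0, if b then 1/4 else Tf u / 2), Jb true)

/-- The regime `1/3 ≤ |t| ≤ 2/3` of `η⁺₁`, with sign `b` and parameter `u = 6|t| - 3`:
`C₁ = [1/2,1] × I_{-b}(u)`, `C₂ = [T(u)/2, T(u)] × J(b)`, `O_b = [0, T(u)/2] × J(b)`,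
`O_{-b} = [0,1/2] × J(-b)`. -/
noncomputable def etaMid (b : Bool) (u : ℝ) : Cfg := fun k =>
  if k = 0 then ((1/2, 1), Ib (!b) u)
  else if k = 1 then ((Tf u / 2, Tf u), Jb b)
  else if k = 2 then ((0, if b then 1/2 else Tf u / 2), Jb false)
  else ((0, if b then Tf u / 2 else 1/2), Jb true)

/-- The regime `|t| ≥ 2/3` of `η⁺₁`, with sign `b`:
`C₁ = [1/2,1] × J(-b)`, `C₂ = [1/2,1] × J(b)`, `O₋ = [0,1/2] × J(-)`,
`O₊ = [0,1/2] × J(+)`. -/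
noncomputable def etaOut (b : Bool) : Cfg := fun k =>
  if k = 0 then ((1/2, 1), Jb (!b))
  else if k = 1 then ((1/2, 1), Jb b)
  else if k = 2 then ((0, 1/2), Jb false)
  else ((0, 1/2), Jb true)

/-- The path `η⁺₁ : [-1,1] → X`, assembled from the three regimes, with sign
`b = (0 ≤ t)`. -/
noncomputable def etaP (t : ℝ) : Cfg :=
  if |t| ≤ 1/3 then etaIn (decide (0 ≤ t)) (6 * |t| - 1)
  else if |t| ≤ 2/3 then etaMid (decide (0 ≤ t)) (6 * |t| - 3)
  else etaOut (decide (0 ≤ t))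

/-- The path `L(t) = α₁(ℓ⁺₁(t), μ₁)`, with `M = |2t|`:
`C₁ = [(13-M)/16, (15-M)/16] × [(-1-2t)/4, (1-2t)/4]`,
`C₂ = [(9+M)/16, (11+M)/16] × [(-1+2t)/4, (1+2t)/4]`,
`O₋ = [0,1/2] × [-1,0]`, `O₊ = [0,1/2] × [0,1]`. -/
noncomputable def Lmap (t : ℝ) : Cfg := fun k =>
  if k = 0 then (((13 - |2*t|)/16, (15 - |2*t|)/16), ((-1 - 2*t)/4, (1 - 2*t)/4))
  else if k = 1 then (((9 + |2*t|)/16, (11 + |2*t|)/16), ((-1 + 2*t)/4, (1 + 2*t)/4))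
  else if k = 2 then ((0, 1/2), (-1, 0))
  else ((0, 1/2), (0, 1))

/-- The loop `Λ`, obtained by concatenating `L` with its closed-label swap:
`Λ(t) = L(2t+1)` for `t ∈ [-1,0]` and `Λ(t) = swap(L(2t-1))` for `t ∈ [0,1]`. -/
noncomputable def Lam (t : ℝ) : Cfg :=
  if t ≤ 0 then Lmap (2*t + 1) else swapC (Lmap (2*t - 1))

/-
The offset between the centres of `C₂` and `C₁` is a nonzero complex number on `X`, because two
rectangles with a common centre have overlapping interiors. Along `Λ` this offset stays in the
left half-plane for `t ≤ 0` and in the right one for `t ≥ 0`, passing from `-i` through `i` back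
to `-i`, so it winds once around the origin: its lift through `exp`, built from two branches of
`log`, does not close up. A null-homotopy of `Λ` would give one of this loop in `ℂ \ {0}`, and by
homotopy lifting its lift would have to close up.
-/

open Complex
open scoped Real

theorem IsCoveringMap.not_homotopic_refl_of_lift {E X : Type*} [TopologicalSpace E]
    [TopologicalSpace X] {p : E → X} (cov : IsCoveringMap p) {x : X} (γ : Path x x)
    (Γ : C(unitInterval, E)) (hΓ : p ∘ Γ = γ) (hne : Γ 0 ≠ Γ 1) :
    ¬ γ.Homotopic (Path.refl x) := by
  have hx : x = p (Γ 0) := by rw [← Function.comp_apply (f := p), hΓ, γ.source]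
  intro h
  have h₁ := cov.liftPath_apply_one_eq_of_homotopicRel h (Γ 0) (γ.source.trans hx) hx
  rw [← (cov.eq_liftPath_iff' _).2 ⟨hΓ, rfl⟩] at h₁
  exact hne (h₁.trans (DFunLike.congr_fun (cov.liftPath_const hx) 1)).symm

theorem Complex.mem_slitPlane_of_re_nonneg {w : ℂ} (hw : w ≠ 0) (hre : 0 ≤ w.re) :
    w ∈ slitPlane := by
  rw [mem_slitPlane_iff]
  by_contra! h
  exact hw (Complex.ext (le_antisymm h.1 hre) h.2)

theorem Complex.log_neg_add_pi_mul_I {w : ℂ} (hw : 0 < w.im) : log (-w) + π * I = log w := by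
  apply Complex.ext <;> simp [log_re, log_im, arg_neg_eq_arg_sub_pi_of_im_pos hw]

theorem Path.not_homotopic_refl_of_re_nonpos_of_re_nonneg {z : {w : ℂ // w ≠ 0}} (γ : Path z z)
    (t₀ : unitInterval) (hz : (z : ℂ).im < 0) (ht₀ : 0 < (γ t₀ : ℂ).im)
    (hleft : ∀ s ≤ t₀, (γ s : ℂ).re ≤ 0) (hright : ∀ s, t₀ ≤ s → 0 ≤ (γ s : ℂ).re) :
    ¬ γ.Homotopic (Path.refl z) := by
  -- `log (-w) + πi` is a branch of `log` on the left half-plane; it agrees with the principal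
  -- branch on the upper half-plane, in particular at `γ t₀`
  let Γ : C(unitInterval, ℂ) :=
    { toFun := fun s => if s ≤ t₀ then log (-γ s) + π * I else log (γ s)
      continuous_toFun := by
        refine continuous_if_le continuous_id continuous_const ?_ ?_ fun s hs => ?_
        · refine (ContinuousOn.clog (by fun_prop) fun s hs => ?_).add continuousOn_const
          exact mem_slitPlane_of_re_nonneg (neg_ne_zero.2 (γ s).2) (by simpa using hleft s hs)
        · refine ContinuousOn.clog (by fun_prop) fun s hs => ?_
          exact mem_slitPlane_of_re_nonneg (γ s).2 (hright s hs)
        · rw [show s = t₀ from hs]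
          exact log_neg_add_pi_mul_I ht₀ }
  refine isCoveringMap_exp.not_homotopic_refl_of_lift γ Γ (funext fun s => Subtype.ext ?_) ?_
  · by_cases hs : s ≤ t₀
    · simp [Γ, hs, exp_add, exp_log (neg_ne_zero.2 (γ s).2)]
    · simp [Γ, hs, exp_log (γ s).2]
  · have ht₀_ne_one : ¬ 1 ≤ t₀ := fun h => by
      rw [unitInterval.le_one'.antisymm h, γ.target] at ht₀
      exact hz.not_gt ht₀
    intro h
    have him := congrArg Complex.im h
    simp [Γ, ht₀_ne_one, log_im, arg_neg_eq_arg_add_pi_of_im_neg hz] at him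
    linarith [Real.pi_pos]

theorem disjoint_interior_rect_iff {r r' : (ℝ × ℝ) × (ℝ × ℝ)} :
    Disjoint (interior (rect r)) (interior (rect r')) ↔
      min r.1.2 r'.1.2 ≤ max r.1.1 r'.1.1 ∨ min r.2.2 r'.2.2 ≤ max r.2.1 r'.2.1 := by
  simp only [rect, interior_prod_eq, interior_Icc, Set.disjoint_prod, Set.Ioo_disjoint_Ioo]

noncomputable def rectCenter (r : (ℝ × ℝ) × (ℝ × ℝ)) : ℝ × ℝ :=
  ((r.1.1 + r.1.2) / 2, (r.2.1 + r.2.2) / 2)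

theorem rectCenter_mem_interior_rect {r : (ℝ × ℝ) × (ℝ × ℝ)} (h₁ : r.1.1 < r.1.2)
    (h₂ : r.2.1 < r.2.2) : rectCenter r ∈ interior (rect r) := by
  simp only [rect, interior_prod_eq, interior_Icc, rectCenter, Set.mem_prod, Set.mem_Ioo]
  constructor <;> constructor <;> linarith

theorem swapC_swapC (x : Cfg) : swapC (swapC x) = x := by
  funext k
  simp [swapC]

theorem continuous_swapC : Continuous swapC :=
  continuous_pi fun _ => continuous_apply _

theorem swapC_mem_Xcfg {x : Cfg} (hx : x ∈ Xcfg) : swapC x ∈ Xcfg := by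
  obtain ⟨hnd, hbox, hdisj, h0, h1, h2, h3⟩ := hx
  exact ⟨fun _ => hnd _, fun _ => hbox _,
    fun k l hkl => hdisj _ _ ((Equiv.swap 0 1).injective.ne hkl), h1, h0, h2, h3⟩

theorem Lmap_one_eq_swapC : Lmap 1 = swapC (Lmap (-1)) := by
  funext k
  fin_cases k <;> norm_num [Lmap, swapC, Equiv.swap_apply_def]

theorem continuous_Lmap : Continuous Lmap := by
  refine continuous_pi fun k => ?_
  unfold Lmap
  split_ifs <;> fun_prop

theorem Lmap_mem_Xcfg {u : ℝ} (hu : |u| ≤ 1) : Lmap u ∈ Xcfg := by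
  have hu' := abs_le.1 hu
  refine ⟨fun k => ?_, fun k => ?_, fun k l hkl => ?_, ?_, ?_, rfl, rfl⟩
  · fin_cases k <;> simp only [Lmap] <;> grind
  · fin_cases k <;> simp only [Lmap] <;> grind
  · rw [disjoint_interior_rect_iff]
    fin_cases k <;> fin_cases l <;> simp only [Lmap, min_le_iff, le_max_iff] at hkl ⊢ <;> grind
  · simp only [Lmap]
    grind
  · simp only [Lmap]
    grind

theorem Lam_of_nonpos {t : ℝ} (ht : t ≤ 0) : Lam t = Lmap (2 * t + 1) := if_pos ht

theorem Lam_of_nonneg {t : ℝ} (ht : 0 ≤ t) : Lam t = swapC (Lmap (2 * t - 1)) := by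
  rcases ht.eq_or_lt with rfl | ht
  · norm_num [Lam, Lmap_one_eq_swapC]
  · exact if_neg ht.not_ge

theorem continuous_Lam : Continuous Lam :=
  (continuous_Lmap.comp (by fun_prop)).if_le (continuous_swapC.comp (continuous_Lmap.comp
    (by fun_prop))) continuous_id continuous_const fun t (ht : t = 0) => by
      norm_num [ht, Lmap_one_eq_swapC]

theorem Lam_mem_Xcfg {t : ℝ} (ht : t ∈ Set.Icc (-1 : ℝ) 1) : Lam t ∈ Xcfg := by
  rcases le_total t 0 with h | h
  · rw [Lam_of_nonpos h]
    exact Lmap_mem_Xcfg (abs_le.2 ⟨by linarith [ht.1], by linarith⟩)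
  · rw [Lam_of_nonneg h]
    exact swapC_mem_Xcfg (Lmap_mem_Xcfg (abs_le.2 ⟨by linarith, by linarith [ht.2]⟩))

theorem Lam_neg_one_eq_Lam_one : Lam (-1) = Lam 1 := by
  rw [Lam_of_nonpos (by norm_num), Lam_of_nonneg (by norm_num)]
  norm_num [Lmap_one_eq_swapC, swapC_swapC]

noncomputable def centerOffset (x : Cfg) : ℂ :=
  equivRealProdCLM.symm (rectCenter (x 1) - rectCenter (x 0))

theorem continuous_centerOffset : Continuous centerOffset :=
  equivRealProdCLM.symm.continuous.comp (by unfold rectCenter; fun_prop)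

theorem centerOffset_ne_zero {x : Cfg} (hx : x ∈ Xcfg) : centerOffset x ≠ 0 := by
  obtain ⟨hnd, -, hdisj, -⟩ := hx
  intro h
  have hc : rectCenter (x 1) = rectCenter (x 0) := by
    rwa [centerOffset, map_eq_zero_iff _ equivRealProdCLM.symm.injective, sub_eq_zero] at h
  refine Set.disjoint_left.mp (hdisj 0 1 (by decide)) ?_
    (rectCenter_mem_interior_rect (hnd 1).1 (hnd 1).2)
  rw [hc]
  exact rectCenter_mem_interior_rect (hnd 0).1 (hnd 0).2

theorem centerOffset_swapC (x : Cfg) : centerOffset (swapC x) = -centerOffset x := by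
  simp only [centerOffset, swapC, Equiv.swap_apply_left, Equiv.swap_apply_right, ← map_neg,
    neg_sub]

theorem centerOffset_Lmap (u : ℝ) : centerOffset (Lmap u) = ⟨(|2 * u| - 2) / 8, u⟩ := by
  simp only [centerOffset, rectCenter, Lmap, Complex.ext_iff, equivRealProdCLM_symm_apply]
  norm_num
  constructor <;> ring

theorem re_centerOffset_Lmap_nonpos {u : ℝ} (hu : |u| ≤ 1) :
    (centerOffset (Lmap u)).re ≤ 0 := by
  rw [centerOffset_Lmap, abs_mul, abs_two]
  dsimp only
  linarith

theorem Path.not_homotopic_refl_of_apply_eq_Lam {y : Xcfg} (p : Path y y)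
    (hp : ∀ s : unitInterval, (p s : Cfg) = Lam (2 * (s : ℝ) - 1)) :
    ¬ p.Homotopic (Path.refl y) := by
  let F : C(Xcfg, {w : ℂ // w ≠ 0}) :=
    ⟨fun x => ⟨centerOffset x, centerOffset_ne_zero x.2⟩,
      (continuous_centerOffset.comp continuous_subtype_val).subtype_mk _⟩
  have hy : (y : Cfg) = Lmap (-1) := by
    rw [← p.source, hp]
    norm_num [Lam_of_nonpos]
  intro h
  refine (p.map F.continuous).not_homotopic_refl_of_re_nonpos_of_re_nonneg
    ⟨1/2, by norm_num, by norm_num⟩ ?_ ?_ (fun s hs => ?_) (fun s hs => ?_) (h.map F)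
  · simp [F, hy, centerOffset_Lmap]
  · simp [F, hp, Lam_of_nonpos, centerOffset_Lmap]
  · have hs' : (s : ℝ) ≤ 1 / 2 := hs
    simp only [Path.map_coe, Function.comp_apply, F, ContinuousMap.coe_mk, hp]
    rw [Lam_of_nonpos (by linarith)]
    exact re_centerOffset_Lmap_nonpos (abs_le.2 ⟨by linarith [s.2.1], by linarith⟩)
  · have hs' : 1 / 2 ≤ (s : ℝ) := hs
    simp only [Path.map_coe, Function.comp_apply, F, ContinuousMap.coe_mk, hp]
    rw [Lam_of_nonneg (by linarith), centerOffset_swapC, neg_re, neg_nonneg]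
    exact re_centerOffset_Lmap_nonpos (abs_le.2 ⟨by linarith, by linarith [s.2.2]⟩)

/-- The loop `Λ` is well defined and continuous (the two formulas agree
at `t = 0` since `L(1) = swap(L(-1))`), it lands in `X`, satisfies `Λ(-1) = Λ(1)`, and it
is not null-homotopic in `X`.  (This witnesses that the homology class of `α₁(ℓ₁, μ₁)` in
the arity `(2, 2)` component of the Swiss-Cheese operad is nonzero.) -/
theorem stmt15 :
    Lmap 1 = swapC (Lmap (-1)) ∧
    Continuous Lam ∧
    (∀ t ∈ Set.Icc (-1 : ℝ) 1, Lam t ∈ Xcfg) ∧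
    Lam (-1) = Lam 1 ∧
    (∀ y : ↥Xcfg, (y : Cfg) = Lam (-1) →
      ∀ p : Path y y, (∀ s : unitInterval, (p s : Cfg) = Lam (2 * (s : ℝ) - 1)) →
        ¬ p.Homotopic (Path.refl y)) :=
  ⟨Lmap_one_eq_swapC, continuous_Lam, fun _ => Lam_mem_Xcfg, Lam_neg_one_eq_Lam_one,
    fun _ _ p hp => p.not_homotopic_refl_of_apply_eq_Lam hp⟩
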